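/- arXiv:1608.01532 — 2 statements merged into one kernel-verified Lean document; each statement's English description precedes it below -/
import Mathlib

section
/- For a connected weighted graph with λ₂ the second-smallest eigenvalue of the normalized Laplacian, the following Loewner-order sandwich holds: 0 ≤ L* − (D^{−1} + D^{−1}AD^{−1} − 2m^{−1} ι_n ι_n') ≤ λ₂^{−1} D^{−1} A D^{−1} A D^{−1}. -/
open Matrix BigOperators

open Classical in
/-- Moore–Penrose pseudoinverse of a real matrix (defined via the four Penrose conditions,
which determine it uniquely; it always exists for real matrices). -/
noncomputable def mpinv {m n : ℕ} (M : Matrix (Fin m) (Fin n) ℝ) : Matrix (Fin n) (Fin m) ℝ :=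
  if h : ∃ N : Matrix (Fin n) (Fin m) ℝ,
      M * N * M = M ∧ N * M * N = N ∧ (M * N)ᵀ = M * N ∧ (N * M)ᵀ = N * M
  then h.choose else 0

/-- The diagonal matrix `D^{-1/2}` for `D = diag d`. -/
noncomputable def dhalfInv {n : ℕ} (d : Fin n → ℝ) : Matrix (Fin n) (Fin n) ℝ :=
  Matrix.diagonal fun i => 1 / Real.sqrt (d i)

/-- The generalized inverse `M* = D^{-1/2} (D^{-1/2} M D^{-1/2})† D^{-1/2}`. -/
noncomputable def gstar {n : ℕ} (d : Fin n → ℝ) (M : Matrix (Fin n) (Fin n) ℝ) :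
    Matrix (Fin n) (Fin n) ℝ :=
  dhalfInv d * mpinv (dhalfInv d * M * dhalfInv d) * dhalfInv d

/-- Connectivity of the weighted graph with adjacency matrix `A`. -/
def Conn {n : ℕ} (A : Matrix (Fin n) (Fin n) ℝ) : Prop :=
  ∀ i j : Fin n, Relation.ReflTransGen (fun a b => A a b ≠ 0) i j

/-!
Write `H = D^{-1/2}`, `S = I - HAH` and `v = √d`, so that `Sv = 0` and `vᵀv = m`. Then
`L* = H S† H`, `D⁻¹ = H H`, `D⁻¹AD⁻¹ = H (I - S) H` and `ιι' = H vvᵀ H`, so both differences are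
congruences by `H` of matrices built from `S`, `S†` and `vvᵀ / m`. The spectral gap makes `v` span
the kernel of `S`, so in an orthonormal eigenbasis of `S` all of these are diagonal. At an
eigenvalue `μ ≥ λ₂` the middle term is `μ⁻¹ + μ - 2 = (1 - μ)² / μ`, which lies between `0` and
`λ₂⁻¹ (1 - μ)²`; on the kernel it is `0 + 0 - 2 + 2 = 0 ≤ λ₂⁻¹`.
-/

theorem penrose_unique {m n : ℕ} {M : Matrix (Fin m) (Fin n) ℝ}
    {N N' : Matrix (Fin n) (Fin m) ℝ}
    (h1 : M * N * M = M) (h2 : N * M * N = N) (h3 : (M * N)ᵀ = M * N) (h4 : (N * M)ᵀ = N * M)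
    (g1 : M * N' * M = M) (g2 : N' * M * N' = N') (g3 : (M * N')ᵀ = M * N')
    (g4 : (N' * M)ᵀ = N' * M) :
    N = N' := by
  have hMN : M * N = M * N' := by
    calc M * N = (M * N')ᵀ * (M * N)ᵀ := by rw [g3, h3, ← Matrix.mul_assoc, g1]
      _ = (M * N * M * N')ᵀ := by simp only [transpose_mul, Matrix.mul_assoc]
      _ = M * N' := by rw [h1, g3]
  have hNM : N * M = N' * M := by
    calc N * M = (N * M)ᵀ * (N' * M)ᵀ := by
          rw [h4, g4, Matrix.mul_assoc, ← Matrix.mul_assoc M, g1]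
      _ = (N' * (M * N) * M)ᵀ := by simp only [transpose_mul, Matrix.mul_assoc]
      _ = N' * M := by rw [hMN, ← Matrix.mul_assoc, g2, g4]
  calc N = N * M * N := h2.symm
    _ = N' * M * N' := by rw [hNM, Matrix.mul_assoc, hMN, Matrix.mul_assoc]
    _ = N' := g2

theorem mpinv_eq_of_penrose {m n : ℕ} {M : Matrix (Fin m) (Fin n) ℝ}
    {N : Matrix (Fin n) (Fin m) ℝ} (h1 : M * N * M = M) (h2 : N * M * N = N)
    (h3 : (M * N)ᵀ = M * N) (h4 : (N * M)ᵀ = N * M) :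
    mpinv M = N := by
  have hex : ∃ N : Matrix (Fin n) (Fin m) ℝ,
      M * N * M = M ∧ N * M * N = N ∧ (M * N)ᵀ = M * N ∧ (N * M)ᵀ = N * M :=
    ⟨N, h1, h2, h3, h4⟩
  obtain ⟨g1, g2, g3, g4⟩ := hex.choose_spec
  rw [mpinv, dif_pos hex]
  exact penrose_unique g1 g2 g3 g4 h1 h2 h3 h4

lemma star_eq_transpose {ι : Type*} (M : Matrix ι ι ℝ) : star M = Mᵀ := by
  rw [star_eq_conjTranspose, conjTranspose_eq_transpose_of_trivial]

section diagConj

variable {ι : Type*} [Fintype ι] [DecidableEq ι]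

noncomputable def diagConj (U : unitary (Matrix ι ι ℝ)) :
    (ι → ℝ) →ₐ[ℝ] Matrix ι ι ℝ :=
  (Unitary.conjStarAlgAut ℝ _ U).toAlgEquiv.toAlgHom.comp (diagonalAlgHom ℝ)

variable (U : unitary (Matrix ι ι ℝ))

lemma diagConj_apply (g : ι → ℝ) :
    diagConj U g = U * diagonal g * star (U : Matrix ι ι ℝ) :=
  rfl

lemma transpose_diagConj (g : ι → ℝ) : (diagConj U g)ᵀ = diagConj U g := by
  rw [← star_eq_transpose, diagConj_apply, star_mul, star_mul, star_star, mul_assoc]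
  simp [star_eq_transpose]

lemma posSemidef_diagConj {g : ι → ℝ} (hg : 0 ≤ g) : (diagConj U g).PosSemidef := by
  simpa [diagConj_apply, star_eq_conjTranspose] using
    (posSemidef_diagonal_iff.mpr hg).mul_mul_conjTranspose_same (U : Matrix ι ι ℝ)

lemma transpose_mul_unitary : (U : Matrix ι ι ℝ)ᵀ * U = 1 := by
  rw [← star_eq_transpose, Unitary.coe_star_mul_self]

lemma unitary_mulVec_injective : Function.Injective ((U : Matrix ι ι ℝ) *ᵥ ·) := by
  intro x y hxy
  simpa [mulVec_mulVec, transpose_mul_unitary] using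
    congrArg ((U : Matrix ι ι ℝ)ᵀ *ᵥ ·) hxy

lemma unitary_mulVec_star_mulVec (v : ι → ℝ) :
    (U : Matrix ι ι ℝ) *ᵥ ((star U : Matrix ι ι ℝ) *ᵥ v) = v := by
  rw [mulVec_mulVec, Unitary.mul_star_self_of_mem U.2, one_mulVec]

lemma dotProduct_unitary_mulVec (x y : ι → ℝ) :
    ((U : Matrix ι ι ℝ) *ᵥ x) ⬝ᵥ ((U : Matrix ι ι ℝ) *ᵥ y) = x ⬝ᵥ y := by
  rw [dotProduct_comm, dotProduct_mulVec, ← mulVec_transpose, mulVec_mulVec,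
    transpose_mul_unitary, one_mulVec, dotProduct_comm]

lemma diagConj_mulVec (g y : ι → ℝ) :
    diagConj U g *ᵥ ((U : Matrix ι ι ℝ) *ᵥ y) = (U : Matrix ι ι ℝ) *ᵥ (g * y) := by
  rw [diagConj_apply, mulVec_mulVec, mul_assoc, mul_assoc, Unitary.coe_star_mul_self, mul_one,
    ← mulVec_mulVec]
  congr 1
  ext k
  simp [mulVec_diagonal]

omit [Fintype ι] in
lemma vecMulVec_self_eq_diagonal {c : ι → ℝ} (hc : ∀ k l, k ≠ l → c k * c l = 0) :
    vecMulVec c c = diagonal (c * c) := by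
  ext k l
  by_cases hkl : k = l
  · simp [vecMulVec_apply, hkl]
  · simp [vecMulVec_apply, hkl, hc k l hkl]

lemma vecMulVec_unitary_mulVec_self {c : ι → ℝ} (hc : ∀ k l, k ≠ l → c k * c l = 0) :
    vecMulVec ((U : Matrix ι ι ℝ) *ᵥ c) ((U : Matrix ι ι ℝ) *ᵥ c) = diagConj U (c * c) := by
  rw [diagConj_apply, ← vecMulVec_self_eq_diagonal hc, mul_vecMulVec, vecMulVec_mul,
    star_eq_transpose, vecMul_transpose]

end diagConj

lemma mpinv_diagConj {n : ℕ} (U : unitary (Matrix (Fin n) (Fin n) ℝ)) (g : Fin n → ℝ) :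
    mpinv (diagConj U g) = diagConj U g⁻¹ := by
  have hg : g * g⁻¹ * g = g := funext fun k => mul_inv_mul_cancel (g k)
  have hg' : g⁻¹ * g * g⁻¹ = g⁻¹ := funext fun k => by simpa using mul_inv_mul_cancel (g k)⁻¹
  refine mpinv_eq_of_penrose ?_ ?_ ?_ ?_ <;>
    simp only [← map_mul, hg, hg', transpose_diagConj]

section SpectralGap

/-! Here `μ` are the eigenvalues of `S` and `c` the coordinates of `v` in an orthonormal
eigenbasis, so `hgap` is the spectral gap `λ ‖y‖² ≤ yᵀ S y` on the complement of `v`. -/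

variable {ι : Type*} [Fintype ι] [DecidableEq ι] {μ c : ι → ℝ} {lam : ℝ}
  (hgap : ∀ y : ι → ℝ, y ≠ 0 → c ⬝ᵥ y = 0 → lam * (y ⬝ᵥ y) ≤ y ⬝ᵥ (μ * y))
include hgap

lemma le_of_spectral_gap {k : ι} (hck : c k = 0) : lam ≤ μ k := by
  simpa [hck] using hgap (Pi.single k 1) (by simp) (by simp [hck])

-- If `c k, c l ≠ 0` then `μ k = μ l = 0`, and `c l e_k - c k e_l ⊥ c` violates the gap.
lemma mul_eq_zero_of_spectral_gap (hlam : 0 < lam) (hμc : μ * c = 0) {k l : ι} (hkl : k ≠ l) :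
    c k * c l = 0 := by
  by_contra hne
  have hμ : ∀ i, c i ≠ 0 → μ i = 0 := fun i hi =>
    (mul_eq_zero.mp (congrFun hμc i)).resolve_right hi
  set y := c l • Pi.single k (1 : ℝ) - c k • Pi.single l 1
  have hyy : y ⬝ᵥ y = c l ^ 2 + c k ^ 2 := by
    simp [y, dotProduct_sub, hkl, hkl.symm]
    ring
  have hyy_pos : 0 < y ⬝ᵥ y := by
    have := left_ne_zero_of_mul hne
    rw [hyy]; positivity
  have hy : y ≠ 0 := by
    rintro hy0
    simp [hy0] at hyy_pos
  have hcy : c ⬝ᵥ y = 0 := by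
    simp [y, dotProduct_sub, mul_comm]
  have hμy : μ * y = 0 := by
    ext i
    by_cases hik : i = k
    · subst hik; simp [y, hμ i (left_ne_zero_of_mul hne)]
    by_cases hil : i = l
    · subst hil; simp [y, hμ i (right_ne_zero_of_mul hne)]
    simp [y, hik, hil]
  have := hgap y hy hcy
  rw [hμy, dotProduct_zero] at this
  nlinarith [mul_pos hlam hyy_pos]

lemma spectral_gap_dichotomy (hlam : 0 < lam) (hμc : μ * c = 0) (k : ι) :
    (c k = 0 ∧ lam ≤ μ k) ∨ (μ k = 0 ∧ (c ⬝ᵥ c)⁻¹ * (c k * c k) = 1) := by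
  by_cases hck : c k = 0
  · exact .inl ⟨hck, le_of_spectral_gap hgap hck⟩
  refine .inr ⟨(mul_eq_zero.mp (congrFun hμc k)).resolve_right hck, ?_⟩
  have hcc : c ⬝ᵥ c = c k * c k := by
    refine Finset.sum_eq_single k (fun l _ hlk => ?_) (by simp)
    have := mul_eq_zero_of_spectral_gap hgap hlam hμc hlk.symm
    simp_all
  rw [hcc, inv_mul_cancel₀ (mul_ne_zero hck hck)]

end SpectralGap

lemma loewner_sandwich_eigenvalue {lam μ q : ℝ} (hlam : 0 < lam)
    (h : (q = 0 ∧ lam ≤ μ) ∨ (μ = 0 ∧ q = 1)) :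
    0 ≤ μ⁻¹ - (1 + (1 - μ) - 2 * q) ∧
      μ⁻¹ - (1 + (1 - μ) - 2 * q) ≤ lam⁻¹ * ((1 - μ) * (1 - μ)) := by
  rcases h with ⟨rfl, hμ⟩ | ⟨rfl, rfl⟩
  · have hμpos : 0 < μ := hlam.trans_le hμ
    have key : μ⁻¹ - (1 + (1 - μ) - 2 * 0) = μ⁻¹ * ((1 - μ) * (1 - μ)) := by
      field_simp; ring
    rw [key]
    exact ⟨mul_nonneg (inv_nonneg.mpr hμpos.le) (mul_self_nonneg _),
      mul_le_mul_of_nonneg_right (inv_anti₀ hlam hμ) (mul_self_nonneg _)⟩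
  · norm_num
    exact hlam.le

section Eigenbasis

variable {ι : Type*} [Fintype ι] [DecidableEq ι] {S : Matrix ι ι ℝ} (hS : S.IsHermitian)

lemma Matrix.IsHermitian.eq_diagConj_eigenvalues :
    S = diagConj hS.eigenvectorUnitary hS.eigenvalues := by
  rw [diagConj_apply]
  simpa using hS.spectral_theorem

lemma Matrix.IsHermitian.eigenvalues_mul_eigencoords {v : ι → ℝ} (hSv : S *ᵥ v = 0) :
    hS.eigenvalues * ((star hS.eigenvectorUnitary : Matrix ι ι ℝ) *ᵥ v) = 0 := by
  apply unitary_mulVec_injective hS.eigenvectorUnitary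
  simp only [← diagConj_mulVec, ← hS.eq_diagConj_eigenvalues, unitary_mulVec_star_mulVec, hSv,
    mulVec_zero]

lemma Matrix.IsHermitian.spectral_gap_eigencoords {v : ι → ℝ} {lam : ℝ}
    (hgap : ∀ x : ι → ℝ, x ≠ 0 → v ⬝ᵥ x = 0 → lam * (x ⬝ᵥ x) ≤ x ⬝ᵥ (S *ᵥ x)) (y : ι → ℝ)
    (hy : y ≠ 0) (hcy : ((star hS.eigenvectorUnitary : Matrix ι ι ℝ) *ᵥ v) ⬝ᵥ y = 0) :
    lam * (y ⬝ᵥ y) ≤ y ⬝ᵥ (hS.eigenvalues * y) := by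
  set U := hS.eigenvectorUnitary
  have := hgap _ (by simpa using (unitary_mulVec_injective U).ne hy) <| by
    rwa [← unitary_mulVec_star_mulVec U v, dotProduct_unitary_mulVec]
  rwa [hS.eq_diagConj_eigenvalues, diagConj_mulVec, dotProduct_unitary_mulVec,
    dotProduct_unitary_mulVec] at this

end Eigenbasis

theorem loewner_sandwich_of_spectral_gap {n : ℕ} {S : Matrix (Fin n) (Fin n) ℝ}
    (hS : S.IsHermitian) {v : Fin n → ℝ} (hSv : S *ᵥ v = 0) {lam : ℝ} (hlam : 0 < lam)
    (hgap : ∀ x : Fin n → ℝ, x ≠ 0 → v ⬝ᵥ x = 0 → lam * (x ⬝ᵥ x) ≤ x ⬝ᵥ (S *ᵥ x)) :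
    (mpinv S - (1 + (1 - S) - (2 * (v ⬝ᵥ v)⁻¹) • vecMulVec v v)).PosSemidef ∧
    (lam⁻¹ • ((1 - S) * (1 - S))
      - (mpinv S - (1 + (1 - S) - (2 * (v ⬝ᵥ v)⁻¹) • vecMulVec v v))).PosSemidef := by
  set U := hS.eigenvectorUnitary
  set μ := hS.eigenvalues
  set c := (star U : Matrix (Fin n) (Fin n) ℝ) *ᵥ v
  have hSU : S = diagConj U μ := hS.eq_diagConj_eigenvalues
  have hμc : μ * c = 0 := hS.eigenvalues_mul_eigencoords hSv
  have hgap' : ∀ y, y ≠ 0 → c ⬝ᵥ y = 0 → lam * (y ⬝ᵥ y) ≤ y ⬝ᵥ (μ * y) :=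
    hS.spectral_gap_eigencoords hgap
  have hv : v = (U : Matrix (Fin n) (Fin n) ℝ) *ᵥ c := (unitary_mulVec_star_mulVec U v).symm
  have hvv : vecMulVec v v = diagConj U (c * c) := hv ▸ vecMulVec_unitary_mulVec_self U
    fun _ _ => mul_eq_zero_of_spectral_gap hgap' hlam hμc
  have hcc : v ⬝ᵥ v = c ⬝ᵥ c := by rw [hv, dotProduct_unitary_mulVec]
  set q := (c ⬝ᵥ c)⁻¹ • (c * c)
  have hX : mpinv S - (1 + (1 - S) - (2 * (v ⬝ᵥ v)⁻¹) • vecMulVec v v)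
      = diagConj U (μ⁻¹ - (1 + (1 - μ) - (2 : ℝ) • q)) := by
    rw [hSU, hvv, hcc, mpinv_diagConj, mul_smul]
    simp only [q, map_sub, map_add, map_one, map_smul]
  have hY : lam⁻¹ • ((1 - S) * (1 - S)) = diagConj U (lam⁻¹ • ((1 - μ) * (1 - μ))) := by
    rw [hSU]
    simp only [map_sub, map_one, map_mul, map_smul]
  have hpt : ∀ k, 0 ≤ (μ k)⁻¹ - (1 + (1 - μ k) - 2 * q k) ∧
      (μ k)⁻¹ - (1 + (1 - μ k) - 2 * q k) ≤ lam⁻¹ * ((1 - μ k) * (1 - μ k)) := fun k =>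
    loewner_sandwich_eigenvalue hlam <| by
      rcases spectral_gap_dichotomy hgap' hlam hμc k with ⟨hck, hμ⟩ | h
      · exact .inl ⟨by simp [q, hck], hμ⟩
      · exact .inr h
  rw [hX, hY, ← map_sub]
  exact ⟨posSemidef_diagConj U fun k => by simpa using (hpt k).1,
    posSemidef_diagConj U fun k => by simpa using (hpt k).2⟩

section NormalizedLaplacian

variable {n : ℕ} {A : Matrix (Fin n) (Fin n) ℝ} {d : Fin n → ℝ}

lemma transpose_dhalfInv (d : Fin n → ℝ) : (dhalfInv d)ᵀ = dhalfInv d :=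
  diagonal_transpose _

lemma dhalfInv_mul_dhalfInv (hd : ∀ i, 0 ≤ d i) :
    dhalfInv d * dhalfInv d = diagonal fun i => (d i)⁻¹ := by
  simp [dhalfInv, ← mul_inv, Real.mul_self_sqrt (hd _)]

lemma dhalfInv_mul_diagonal_mul_dhalfInv (hd : ∀ i, 0 < d i) :
    dhalfInv d * diagonal d * dhalfInv d = 1 := by
  rw [mul_assoc, dhalfInv, diagonal_mul_diagonal, diagonal_mul_diagonal, ← diagonal_one]
  congr 1
  ext i
  have := Real.sqrt_pos.mpr (hd i)
  field_simp
  rw [Real.sq_sqrt (hd i).le]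

lemma dhalfInv_mulVec_sqrt (hd : ∀ i, 0 < d i) :
    dhalfInv d *ᵥ (fun i => √(d i)) = fun _ => 1 := by
  ext i
  simp [dhalfInv, mulVec_diagonal, (Real.sqrt_pos.mpr (hd i)).ne']

lemma dhalfInv_mulVec_self (d : Fin n → ℝ) : dhalfInv d *ᵥ d = fun i => √(d i) := by
  ext i
  simp [dhalfInv, mulVec_diagonal, inv_mul_eq_div, Real.div_sqrt]

lemma vecMulVec_one_eq_dhalfInv_conj (hd : ∀ i, 0 < d i) :
    vecMulVec (fun _ => (1 : ℝ)) (fun _ => 1)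
      = dhalfInv d * vecMulVec (fun i => √(d i)) (fun i => √(d i)) * dhalfInv d := by
  rw [mul_vecMulVec, vecMulVec_mul, ← mulVec_transpose, transpose_dhalfInv,
    dhalfInv_mulVec_sqrt hd]

lemma isHermitian_one_sub_dhalfInv_conj (hsym : Aᵀ = A) :
    (1 - dhalfInv d * A * dhalfInv d).IsHermitian := by
  rw [IsHermitian, conjTranspose_eq_transpose_of_trivial, transpose_sub, transpose_one,
    transpose_mul, transpose_mul, transpose_dhalfInv, hsym, mul_assoc]

lemma one_sub_dhalfInv_conj_mulVec_sqrt (hdeg : ∀ i, d i = ∑ j, A i j) (hd : ∀ i, 0 < d i) :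
    (1 - dhalfInv d * A * dhalfInv d) *ᵥ (fun i => √(d i)) = 0 := by
  have hA1 : A *ᵥ (fun _ => 1) = d := funext fun i => by simp [mulVec, dotProduct, hdeg i]
  rw [sub_mulVec, one_mulVec, ← mulVec_mulVec, ← mulVec_mulVec, dhalfInv_mulVec_sqrt hd, hA1,
    dhalfInv_mulVec_self, sub_self]

lemma gstar_diagonal_sub (hd : ∀ i, 0 < d i) :
    gstar d (diagonal d - A)
      = dhalfInv d * mpinv (1 - dhalfInv d * A * dhalfInv d) * dhalfInv d := by
  rw [gstar, Matrix.mul_sub, Matrix.sub_mul, dhalfInv_mul_diagonal_mul_dhalfInv hd]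

end NormalizedLaplacian

theorem stmt11_general {n : ℕ} (A : Matrix (Fin n) (Fin n) ℝ) (hsym : Aᵀ = A)
    (d : Fin n → ℝ) (hdeg : ∀ i, d i = ∑ j, A i j) (hdpos : ∀ i, 0 < d i)
    (S : Matrix (Fin n) (Fin n) ℝ)
    (hS : S = 1 - dhalfInv d * A * dhalfInv d)
    (lam2 : ℝ) (hlampos : 0 < lam2)
    (hlam : IsLeast {r : ℝ | ∃ x : Fin n → ℝ, x ≠ 0 ∧
        (fun i => Real.sqrt (d i)) ⬝ᵥ x = 0 ∧ r = (x ⬝ᵥ (S *ᵥ x)) / (x ⬝ᵥ x)} lam2)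
    (Dinv : Matrix (Fin n) (Fin n) ℝ) (hDinv : Dinv = Matrix.diagonal fun i => (d i)⁻¹) :
    (gstar d (Matrix.diagonal d - A)
      - (Dinv + Dinv * A * Dinv
          - (2 * (∑ i, d i)⁻¹) • vecMulVec (fun _ => (1 : ℝ)) (fun _ => (1 : ℝ)))).PosSemidef ∧
    (lam2⁻¹ • (Dinv * A * Dinv * A * Dinv)
      - (gstar d (Matrix.diagonal d - A)
          - (Dinv + Dinv * A * Dinv
              - (2 * (∑ i, d i)⁻¹) • vecMulVec (fun _ => (1 : ℝ))
                  (fun _ => (1 : ℝ))))).PosSemidef := by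
  rw [gstar_diagonal_sub hdpos, ← hS, hDinv, ← dhalfInv_mul_dhalfInv fun i => (hdpos i).le,
    vecMulVec_one_eq_dhalfInv_conj hdpos]
  set H := dhalfInv d
  set v : Fin n → ℝ := fun i => √(d i)
  have hgap : ∀ x : Fin n → ℝ, x ≠ 0 → v ⬝ᵥ x = 0 → lam2 * (x ⬝ᵥ x) ≤ x ⬝ᵥ (S *ᵥ x) :=
    fun x hx hvx => (le_div_iff₀ (by simpa using dotProduct_self_star_pos_iff.mpr hx)).mp
      (hlam.2 ⟨x, hx, hvx, rfl⟩)
  obtain ⟨hlow, hup⟩ := loewner_sandwich_of_spectral_gap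
    (hS ▸ isHermitian_one_sub_dhalfInv_conj hsym)
    (hS ▸ one_sub_dhalfInv_conj_mulVec_sqrt hdeg hdpos)
    hlampos hgap
  have hvv : v ⬝ᵥ v = ∑ i, d i := Finset.sum_congr rfl fun i _ => Real.mul_self_sqrt (hdpos i).le
  have hHAH : H * A * H = 1 - S := by rw [hS, sub_sub_cancel]
  rw [hvv, ← hHAH] at hlow hup
  have hconj : ∀ X, PosSemidef X → PosSemidef (H * X * H) := fun X hX => by
    simpa [conjTranspose_eq_transpose_of_trivial, H, transpose_dhalfInv] using
      hX.conjTranspose_mul_mul_same H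
  have := And.intro (hconj _ hlow) (hconj _ hup)
  simpa only [Matrix.mul_sub, Matrix.sub_mul, Matrix.mul_add, Matrix.add_mul, Matrix.mul_smul,
    Matrix.smul_mul, Matrix.mul_one, Matrix.mul_assoc] using this

/-- Loewner sandwich
`0 ≤ L* - (D⁻¹ + D⁻¹AD⁻¹ - 2m⁻¹ ιι') ≤ λ₂⁻¹ D⁻¹AD⁻¹AD⁻¹`. -/
theorem stmt11 {n : ℕ} (A : Matrix (Fin n) (Fin n) ℝ) (hsym : Aᵀ = A)
    (hnn : ∀ i j, 0 ≤ A i j) (hdiag : ∀ i, A i i = 0)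
    (d : Fin n → ℝ) (hdeg : ∀ i, d i = ∑ j, A i j) (hdpos : ∀ i, 0 < d i)
    (hconn : Conn A)
    (S : Matrix (Fin n) (Fin n) ℝ)
    (hS : S = 1 - dhalfInv d * A * dhalfInv d)
    (lam2 : ℝ) (hlampos : 0 < lam2)
    (hlam : IsLeast {r : ℝ | ∃ x : Fin n → ℝ, x ≠ 0 ∧
        (fun i => Real.sqrt (d i)) ⬝ᵥ x = 0 ∧ r = (x ⬝ᵥ (S *ᵥ x)) / (x ⬝ᵥ x)} lam2)
    (Dinv : Matrix (Fin n) (Fin n) ℝ) (hDinv : Dinv = Matrix.diagonal fun i => (d i)⁻¹) :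
    (gstar d (Matrix.diagonal d - A)
      - (Dinv + Dinv * A * Dinv
          - (2 * (∑ i, d i)⁻¹) • vecMulVec (fun _ => (1 : ℝ)) (fun _ => (1 : ℝ)))).PosSemidef ∧
    (lam2⁻¹ • (Dinv * A * Dinv * A * Dinv)
      - (gstar d (Matrix.diagonal d - A)
          - (Dinv + Dinv * A * Dinv
              - (2 * (∑ i, d i)⁻¹) • vecMulVec (fun _ => (1 : ℝ))
                  (fun _ => (1 : ℝ))))).PosSemidef :=
  stmt11_general A hsym d hdeg hdpos S hS lam2 hlampos hlam Dinv hDinv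
end

section
/- Under the alternative normalization Σ_i α_i = 0, the variance of the fixed-effect estimator satisfies var(α̂°_i) = σ² (L†)_{ii} ≤ (σ²/(λ₂ d_i))(1 + d_i/(n h)), where h is the harmonic mean of the degrees. -/
/-!
Write `N = L†`. The hypothesis on `λ₂` is a Poincaré inequality
`λ₂ ∑ₖ dₖ (yₖ - ȳ)² ≤ yᵀ L y`, `ȳ` the `d`-weighted mean of `y`; it forces `ker L = span 1`,
so every mean-zero `v` is `L u` with `u = N v`. As `N` kills `1` on both sides, for
`v = eᵢ - 1/n` we get `Nᵢᵢ = vᵀ N v = uᵀ v = (u - ȳ)ᵀ v`, and Cauchy–Schwarz with weights `d`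
together with Poincaré gives `λ₂ (uᵀ v)² ≤ uᵀ L u · ∑ₖ vₖ² / dₖ = uᵀ v · ∑ₖ vₖ² / dₖ`.
Hence `Nᵢᵢ ≤ λ₂⁻¹ ∑ₖ vₖ² / dₖ ≤ λ₂⁻¹ (1 / dᵢ + 1 / (n h))`.
-/

open Matrix BigOperators

section Penrose

variable {n : ℕ} {M : Matrix (Fin n) (Fin n) ℝ}

/-- Invert the nonzero eigenvalues in a spectral decomposition `M = U diag(f) Uᵀ`. -/
theorem exists_penrose_of_isSymm (hM : M.IsSymm) :
    ∃ N : Matrix (Fin n) (Fin n) ℝ,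
      M * N * M = M ∧ N * M * N = N ∧ (M * N)ᵀ = M * N ∧ (N * M)ᵀ = N * M := by
  have hH : M.IsHermitian := isHermitian_iff_isSymm.mpr hM
  set U : Matrix (Fin n) (Fin n) ℝ := ↑hH.eigenvectorUnitary
  set f : Fin n → ℝ := hH.eigenvalues
  have hUU : star U * U = 1 := Unitary.star_mul_self_of_mem hH.eigenvectorUnitary.2
  have hspec : M = U * diagonal f * star U := by
    simpa [Function.comp_def] using hH.spectral_theorem
  have hmul : ∀ F G : Fin n → ℝ, (U * diagonal F * star U) * (U * diagonal G * star U)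
      = U * diagonal (F * G) * star U := by
    intro F G
    calc (U * diagonal F * star U) * (U * diagonal G * star U)
        = U * (diagonal F * (star U * U) * diagonal G) * star U := by
          simp only [Matrix.mul_assoc]
      _ = U * diagonal (F * G) * star U := by
          rw [hUU, Matrix.mul_one, diagonal_mul_diagonal]; rfl
  have hsymm : ∀ F : Fin n → ℝ, (U * diagonal F * star U)ᵀ = U * diagonal F * star U := by
    intro F
    rw [star_eq_conjTranspose, conjTranspose_eq_transpose_of_trivial, transpose_mul,
      transpose_mul, transpose_transpose, diagonal_transpose, Matrix.mul_assoc]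
  have hinv : f * f⁻¹ * f = f ∧ f⁻¹ * f * f⁻¹ = f⁻¹ := by
    constructor <;> funext k <;> by_cases hk : f k = 0 <;> simp [hk]
  refine ⟨U * diagonal f⁻¹ * star U, ?_, ?_, ?_, ?_⟩
  · rw [hspec, hmul, hmul, hinv.1]
  · rw [hspec, hmul, hmul, hinv.2]
  · rw [hspec, hmul]; exact hsymm _
  · rw [hspec, hmul]; exact hsymm _

theorem mpinv_penrose (hM : M.IsSymm) :
    M * mpinv M * M = M ∧ mpinv M * M * mpinv M = mpinv M ∧
      (M * mpinv M)ᵀ = M * mpinv M ∧ (mpinv M * M)ᵀ = mpinv M * M := by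
  have hex := exists_penrose_of_isSymm hM
  rw [mpinv, dif_pos hex]
  exact hex.choose_spec

theorem mul_mul_mpinv (hM : M.IsSymm) : M * (M * mpinv M) = M := by
  obtain ⟨h1, -, h3, -⟩ := mpinv_penrose hM
  calc M * (M * mpinv M) = M * (M * mpinv M)ᵀ := by rw [h3]
    _ = (M * mpinv M * M)ᵀ := by rw [transpose_mul (M * mpinv M) M, hM.eq]
    _ = M := by rw [h1, hM.eq]

theorem mpinv_mulVec_eq_zero (hM : M.IsSymm) {x : Fin n → ℝ} (hx : M *ᵥ x = 0) :
    mpinv M *ᵥ x = 0 := by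
  obtain ⟨-, h2, h3, -⟩ := mpinv_penrose hM
  have hN : mpinv M = mpinv M * (mpinv M)ᵀ * M := by
    calc mpinv M = mpinv M * (M * mpinv M)ᵀ := by rw [h3, ← Matrix.mul_assoc, h2]
      _ = mpinv M * (mpinv M)ᵀ * M := by rw [transpose_mul, hM.eq, Matrix.mul_assoc]
  rw [hN, ← mulVec_mulVec, hx, mulVec_zero]

theorem vecMul_mpinv_eq_zero (hM : M.IsSymm) {x : Fin n → ℝ} (hx : M *ᵥ x = 0) :
    x ᵥ* mpinv M = 0 := by
  obtain ⟨-, h2, -, h4⟩ := mpinv_penrose hM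
  have hN : mpinv M = M * (mpinv M)ᵀ * mpinv M := by
    calc mpinv M = (mpinv M * M)ᵀ * mpinv M := by rw [h4, h2]
      _ = M * (mpinv M)ᵀ * mpinv M := by rw [transpose_mul, hM.eq]
  have hxM : x ᵥ* M = 0 := by simpa [hM.eq] using (vecMul_transpose M x).trans hx
  rw [hN, ← vecMul_vecMul, ← vecMul_vecMul, hxM, zero_vecMul, zero_vecMul]

end Penrose

section Laplacian

variable {ι : Type*} [Fintype ι]

theorem laplacian_mulVec_one [DecidableEq ι] {A : Matrix ι ι ℝ} {d : ι → ℝ}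
    (hdeg : ∀ i, d i = ∑ j, A i j) : (diagonal d - A) *ᵥ 1 = 0 := by
  funext i
  simp [mulVec, dotProduct, diagonal_apply, ← hdeg]

theorem sum_mulVec_eq_zero {L : Matrix ι ι ℝ} (hL : L.IsSymm) (hL1 : L *ᵥ 1 = 0) (x : ι → ℝ) :
    ∑ k, (L *ᵥ x) k = 0 := by
  rw [← one_dotProduct, dotProduct_mulVec, ← hL.eq, vecMul_transpose, hL1, zero_dotProduct]

theorem exists_poincare_of_centered {L : Matrix ι ι ℝ} {d : ι → ℝ} {lam2 : ℝ} (hL : L.IsSymm)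
    (hL1 : L *ᵥ 1 = 0) (hd : ∑ k, d k ≠ 0)
    (hP : ∀ z : ι → ℝ, ∑ k, d k * z k = 0 → lam2 * ∑ k, d k * z k ^ 2 ≤ z ⬝ᵥ (L *ᵥ z))
    (y : ι → ℝ) : ∃ c, lam2 * ∑ k, d k * (y k - c) ^ 2 ≤ y ⬝ᵥ (L *ᵥ y) := by
  set c := (∑ k, d k * y k) / ∑ k, d k
  refine ⟨c, ?_⟩
  have hcenter : ∑ k, d k * (y - c • 1) k = 0 := by
    simp only [Pi.sub_apply, Pi.smul_apply, Pi.one_apply, smul_eq_mul, mul_one, mul_sub,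
      Finset.sum_sub_distrib, ← Finset.sum_mul, c]
    field_simp
    ring
  have henergy : (y - c • 1) ⬝ᵥ (L *ᵥ (y - c • 1)) = y ⬝ᵥ (L *ᵥ y) := by
    rw [mulVec_sub, mulVec_smul, hL1, smul_zero, sub_zero, sub_dotProduct, smul_dotProduct,
      one_dotProduct, sum_mulVec_eq_zero hL hL1, smul_zero, sub_zero]
  simpa [henergy] using hP _ hcenter

theorem eq_const_of_mulVec_eq_zero {L : Matrix ι ι ℝ} {d : ι → ℝ} {lam2 : ℝ} (hlam : 0 < lam2)
    (hd : ∀ k, 0 < d k)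
    (hP : ∀ y : ι → ℝ, ∃ c, lam2 * ∑ k, d k * (y k - c) ^ 2 ≤ y ⬝ᵥ (L *ᵥ y))
    {y : ι → ℝ} (hy : L *ᵥ y = 0) : ∃ c : ℝ, y = fun _ => c := by
  obtain ⟨c, hc⟩ := hP y
  rw [hy, dotProduct_zero] at hc
  have hterm_nonneg : ∀ k ∈ Finset.univ, 0 ≤ d k * (y k - c) ^ 2 :=
    fun k _ => mul_nonneg (hd k).le (sq_nonneg _)
  have hsum : ∑ k, d k * (y k - c) ^ 2 = 0 :=
    le_antisymm (nonpos_of_mul_nonpos_right hc hlam) (Finset.sum_nonneg hterm_nonneg)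
  refine ⟨c, funext fun k => ?_⟩
  have hk := (Finset.sum_eq_zero_iff_of_nonneg hterm_nonneg).mp hsum k (Finset.mem_univ k)
  rcases mul_eq_zero.mp hk with h | h
  · exact absurd h (hd k).ne'
  · exact sub_eq_zero.mp (pow_eq_zero_iff two_ne_zero |>.mp h)

theorem dotProduct_le_of_mulVec_eq {L : Matrix ι ι ℝ} {d : ι → ℝ} {lam2 : ℝ} (hlam : 0 < lam2)
    (hd : ∀ k, 0 < d k)
    (hP : ∀ y : ι → ℝ, ∃ c, lam2 * ∑ k, d k * (y k - c) ^ 2 ≤ y ⬝ᵥ (L *ᵥ y))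
    {u v : ι → ℝ} (hv : ∑ k, v k = 0) (hu : L *ᵥ u = v) :
    u ⬝ᵥ v ≤ lam2⁻¹ * ∑ k, v k ^ 2 / d k := by
  obtain ⟨c, hc⟩ := hP u
  rw [hu] at hc
  set q := ∑ k, d k * (u k - c) ^ 2
  set R := ∑ k, v k ^ 2 / d k
  have hR : 0 ≤ R := Finset.sum_nonneg fun k _ => div_nonneg (sq_nonneg _) (hd k).le
  have hcs : (u ⬝ᵥ v) ^ 2 ≤ q * R := by
    have hshift : u ⬝ᵥ v = ∑ k, (u k - c) * v k := by
      simp only [dotProduct, sub_mul, Finset.sum_sub_distrib, ← Finset.mul_sum, hv, mul_zero,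
        sub_zero]
    rw [hshift]
    refine Finset.sum_sq_le_sum_mul_sum_of_sq_le_mul _
      (fun k _ => mul_nonneg (hd k).le (sq_nonneg _))
      (fun k _ => div_nonneg (sq_nonneg _) (hd k).le) fun k _ => le_of_eq ?_
    field_simp [(hd k).ne']
  rw [inv_mul_eq_div, le_div_iff₀ hlam]
  rcases le_or_gt (u ⬝ᵥ v) 0 with ht | ht <;> nlinarith

end Laplacian

theorem mulVec_mpinv_mulVec {n : ℕ} {L : Matrix (Fin n) (Fin n) ℝ} (hL : L.IsSymm)
    (hL1 : L *ᵥ 1 = 0) (hker : ∀ y, L *ᵥ y = 0 → ∃ c : ℝ, y = fun _ => c)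
    {w : Fin n → ℝ} (hw : ∑ k, w k = 0) : L *ᵥ (mpinv L *ᵥ w) = w := by
  set y := w - L *ᵥ (mpinv L *ᵥ w)
  have hy : L *ᵥ y = 0 := by
    rw [mulVec_sub, mulVec_mulVec, mulVec_mulVec, Matrix.mul_assoc, mul_mul_mpinv hL, sub_self]
  have hysum : ∑ k, y k = 0 := by
    simp only [y, Pi.sub_apply, Finset.sum_sub_distrib, hw, sum_mulVec_eq_zero hL hL1, sub_self]
  obtain ⟨c, hc⟩ := hker y hy
  refine (sub_eq_zero.mp (funext fun k => ?_)).symm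
  have hn : (n : ℝ) ≠ 0 := Nat.cast_ne_zero.mpr (Fin.pos k).ne'
  rw [hc, Finset.sum_const, Finset.card_univ, Fintype.card_fin, nsmul_eq_mul] at hysum
  have hc0 : c = 0 := by simpa [hn] using hysum
  change y k = 0
  simp [hc, hc0]

theorem apply_self_eq_dotProduct_mulVec {ι : Type*} [Fintype ι] [DecidableEq ι]
    {N : Matrix ι ι ℝ} (hN1 : N *ᵥ 1 = 0) (h1N : 1 ᵥ* N = 0) (i : ι) (c : ℝ) :
    N i i = (Pi.single i 1 - c • 1) ⬝ᵥ (N *ᵥ (Pi.single i 1 - c • 1)) := by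
  rw [mulVec_sub, mulVec_smul, hN1, smul_zero, sub_zero, sub_dotProduct, smul_dotProduct,
    dotProduct_mulVec 1, h1N, zero_dotProduct, smul_zero, sub_zero, single_dotProduct, one_mul]
  simp [mulVec, dotProduct, Pi.single_apply]

theorem sum_sq_single_sub_div_le {ι : Type*} [Fintype ι] [DecidableEq ι] {d : ι → ℝ}
    (hd : ∀ k, 0 < d k) (i : ι) {c : ℝ} (hc : 0 ≤ c) :
    ∑ k, (Pi.single i 1 - c • 1 : ι → ℝ) k ^ 2 / d k ≤ (d i)⁻¹ + c ^ 2 * ∑ k, (d k)⁻¹ := by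
  have hterm : ∀ k,
      (Pi.single i 1 - c • 1 : ι → ℝ) k ^ 2 ≤ (Pi.single i 1 : ι → ℝ) k + c ^ 2 := by
    intro k
    rcases eq_or_ne k i with rfl | hk
    · simp only [Pi.sub_apply, Pi.single_eq_same, Pi.smul_apply, Pi.one_apply, smul_eq_mul]
      nlinarith
    · simp [hk]
  calc ∑ k, (Pi.single i 1 - c • 1 : ι → ℝ) k ^ 2 / d k
      ≤ ∑ k, ((Pi.single i 1 : ι → ℝ) k + c ^ 2) / d k :=
        Finset.sum_le_sum fun k _ => div_le_div_of_nonneg_right (hterm k) (hd k).le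
    _ = (d i)⁻¹ + c ^ 2 * ∑ k, (d k)⁻¹ := by
        simp [add_mul, Finset.sum_add_distrib, Finset.mul_sum, Pi.single_apply, div_eq_mul_inv]

section Normalized

variable {n : ℕ} {A S : Matrix (Fin n) (Fin n) ℝ} {d : Fin n → ℝ}

theorem dotProduct_normalizedLaplacian_mulVec (hd : ∀ k, 0 < d k) (z : Fin n → ℝ) :
    (fun k => √(d k) * z k) ⬝ᵥ ((1 - dhalfInv d * A * dhalfInv d) *ᵥ fun k => √(d k) * z k)
      = z ⬝ᵥ ((diagonal d - A) *ᵥ z) := by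
  have hsq : ∀ k, √(d k) ≠ 0 := fun k => (Real.sqrt_pos.mpr (hd k)).ne'
  have hDD : dhalfInv d * diagonal d * dhalfInv d = 1 := by
    rw [dhalfInv, diagonal_mul_diagonal, diagonal_mul_diagonal, ← diagonal_one]
    congr 1
    funext k
    field_simp [hsq k]
    exact (Real.sq_sqrt (hd k).le).symm
  have hconj : 1 - dhalfInv d * A * dhalfInv d = dhalfInv d * (diagonal d - A) * dhalfInv d := by
    rw [Matrix.mul_sub, Matrix.sub_mul, hDD]
  have hz : ∀ k, 1 / √(d k) * (√(d k) * z k) = z k := fun k => by field_simp [hsq k]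
  have hmul : dhalfInv d *ᵥ (fun k => √(d k) * z k) = z := by
    funext k; rw [dhalfInv, mulVec_diagonal, hz]
  have hvec : (fun k => √(d k) * z k) ᵥ* dhalfInv d = z := by
    funext k; rw [dhalfInv, vecMul_diagonal, mul_comm, hz]
  rw [hconj, ← mulVec_mulVec, ← mulVec_mulVec, hmul, dotProduct_mulVec, hvec]

theorem poincare_of_mem_lowerBounds (hd : ∀ k, 0 < d k) (hS : S = 1 - dhalfInv d * A * dhalfInv d)
    {lam2 : ℝ} (hlam : lam2 ∈ lowerBounds {r : ℝ | ∃ x : Fin n → ℝ, x ≠ 0 ∧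
        (fun i => Real.sqrt (d i)) ⬝ᵥ x = 0 ∧ r = (x ⬝ᵥ (S *ᵥ x)) / (x ⬝ᵥ x)})
    {z : Fin n → ℝ} (hz : ∑ k, d k * z k = 0) :
    lam2 * ∑ k, d k * z k ^ 2 ≤ z ⬝ᵥ ((diagonal d - A) *ᵥ z) := by
  rcases eq_or_ne z 0 with rfl | hz0
  · simp
  set x : Fin n → ℝ := fun k => √(d k) * z k
  have hsq : ∀ k, √(d k) * √(d k) = d k := fun k => Real.mul_self_sqrt (hd k).le
  have hxx : x ⬝ᵥ x = ∑ k, d k * z k ^ 2 := by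
    simp only [dotProduct, x]
    exact Finset.sum_congr rfl fun k _ => by linear_combination z k ^ 2 * hsq k
  have hx0 : x ≠ 0 := by
    obtain ⟨k, hk⟩ := Function.ne_iff.mp hz0
    exact Function.ne_iff.mpr ⟨k, mul_ne_zero (Real.sqrt_pos.mpr (hd k)).ne' hk⟩
  have hxpos : 0 < x ⬝ᵥ x := by
    obtain ⟨k, hk⟩ := Function.ne_iff.mp hz0
    rw [hxx]
    exact Finset.sum_pos' (fun l _ => mul_nonneg (hd l).le (sq_nonneg _))
      ⟨k, Finset.mem_univ k, mul_pos (hd k) (sq_pos_iff.mpr hk)⟩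
  have horth : (fun k => √(d k)) ⬝ᵥ x = 0 := by
    simp only [dotProduct, x, ← mul_assoc, hsq]
    exact hz
  have hle := hlam ⟨x, hx0, horth, rfl⟩
  rwa [hS, dotProduct_normalizedLaplacian_mulVec hd, le_div_iff₀ hxpos, hxx] at hle

end Normalized

theorem stmt16_general {n : ℕ} (A : Matrix (Fin n) (Fin n) ℝ) (hsym : Aᵀ = A)
    (d : Fin n → ℝ) (hdeg : ∀ i, d i = ∑ j, A i j) (hdpos : ∀ i, 0 < d i)
    (S : Matrix (Fin n) (Fin n) ℝ)
    (hS : S = 1 - dhalfInv d * A * dhalfInv d)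
    (lam2 : ℝ) (hlampos : 0 < lam2)
    (hlam : IsLeast {r : ℝ | ∃ x : Fin n → ℝ, x ≠ 0 ∧
        (fun i => Real.sqrt (d i)) ⬝ᵥ x = 0 ∧ r = (x ⬝ᵥ (S *ᵥ x)) / (x ⬝ᵥ x)} lam2)
    (h : ℝ) (hh : h = (((n : ℝ))⁻¹ * ∑ j, (d j)⁻¹)⁻¹)
    (σ2 : ℝ) (hσ : 0 ≤ σ2) (i : Fin n) :
    σ2 * mpinv (Matrix.diagonal d - A) i i ≤
      σ2 / (lam2 * d i) * (1 + d i / (n * h)) := by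
  set L := diagonal d - A
  have hL : L.IsSymm := (isSymm_diagonal d).sub hsym
  have hL1 : L *ᵥ 1 = 0 := laplacian_mulVec_one hdeg
  have hP := exists_poincare_of_centered hL hL1
    (Finset.sum_pos (fun k _ => hdpos k) ⟨i, Finset.mem_univ i⟩).ne'
    fun _ => poincare_of_mem_lowerBounds hdpos hS hlam.2
  have hker : ∀ y, L *ᵥ y = 0 → ∃ c : ℝ, y = fun _ => c :=
    fun _ => eq_const_of_mulVec_eq_zero hlampos hdpos hP
  have hn : (n : ℝ) ≠ 0 := Nat.cast_ne_zero.mpr (Fin.pos i).ne'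
  set v : Fin n → ℝ := Pi.single i 1 - (n : ℝ)⁻¹ • 1
  have hv : ∑ k, v k = 0 := by simp [v, Finset.sum_sub_distrib, hn]
  have hdiag : mpinv L i i ≤ lam2⁻¹ * ((d i)⁻¹ + ((n : ℝ)⁻¹) ^ 2 * ∑ k, (d k)⁻¹) := by
    rw [apply_self_eq_dotProduct_mulVec (mpinv_mulVec_eq_zero hL hL1)
      (vecMul_mpinv_eq_zero hL hL1) i (n : ℝ)⁻¹, dotProduct_comm]
    refine (dotProduct_le_of_mulVec_eq hlampos hdpos hP hv
      (mulVec_mpinv_mulVec hL hL1 hker hv)).trans ?_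
    gcongr
    exact sum_sq_single_sub_div_le hdpos i (by positivity)
  calc σ2 * mpinv L i i ≤ σ2 * (lam2⁻¹ * ((d i)⁻¹ + ((n : ℝ)⁻¹) ^ 2 * ∑ k, (d k)⁻¹)) := by
        gcongr
    _ = σ2 / (lam2 * d i) * (1 + d i / (n * h)) := by
        rw [hh]
        field_simp [hlampos.ne', (hdpos i).ne']

/-- under the normalization `Σᵢ αᵢ = 0`,
`var(α̂°ᵢ) = σ² (L†)ᵢᵢ ≤ (σ²/(λ₂ dᵢ))(1 + dᵢ/(n h))`. -/
theorem stmt16 {n : ℕ} (A : Matrix (Fin n) (Fin n) ℝ) (hsym : Aᵀ = A)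
    (hnn : ∀ i j, 0 ≤ A i j) (hdiag : ∀ i, A i i = 0)
    (d : Fin n → ℝ) (hdeg : ∀ i, d i = ∑ j, A i j) (hdpos : ∀ i, 0 < d i)
    (hconn : Conn A)
    (S : Matrix (Fin n) (Fin n) ℝ)
    (hS : S = 1 - dhalfInv d * A * dhalfInv d)
    (lam2 : ℝ) (hlampos : 0 < lam2)
    (hlam : IsLeast {r : ℝ | ∃ x : Fin n → ℝ, x ≠ 0 ∧
        (fun i => Real.sqrt (d i)) ⬝ᵥ x = 0 ∧ r = (x ⬝ᵥ (S *ᵥ x)) / (x ⬝ᵥ x)} lam2)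
    (h : ℝ) (hh : h = (((n : ℝ))⁻¹ * ∑ j, (d j)⁻¹)⁻¹)
    (σ2 : ℝ) (hσ : 0 ≤ σ2) (i : Fin n) :
    σ2 * mpinv (Matrix.diagonal d - A) i i ≤
      σ2 / (lam2 * d i) * (1 + d i / (n * h)) :=
  stmt16_general A hsym d hdeg hdpos S hS lam2 hlampos hlam h hh σ2 hσ i
end
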